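/- cap_d(k) = Θ(k^{(d−1)/2}) as k → ∞ for every fixed dimension d ≥ 1; i.e., there exist positive constants c, C (depending only on d) such that c·k^{(d−1)/2} ≤ cap_d(k) ≤ C·k^{(d−1)/2} for all sufficiently large k. -/

import Mathlib

open scoped BigOperators

/-- `cap_d(k)` defined by `cap_1(k) = 1`, `cap_2(k) = (k!/k^k) ∑_{l=0}^k k^l/l!`, and the
recursion `cap_d(k) = cap_{d−1}(k) + (k/(d−2)) cap_{d−2}(k)` for `d ≥ 3`. -/
noncomputable def cap : ℕ → ℕ → ℝ
  | 0, _ => 0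
  | 1, _ => 1
  | 2, k => ((Nat.factorial k : ℝ) / (k : ℝ) ^ k) *
      ∑ l ∈ Finset.range (k + 1), (k : ℝ) ^ l / (Nat.factorial l : ℝ)
  | (d + 3), k => cap (d + 2) k + ((k : ℝ) / ((d : ℝ) + 1)) * cap (d + 1) k

namespace CapAux

open Finset

/-- the falling-factorial ratio `k!/((k-j)! k^j) = ∏_{i<j} (k-i)/k`. -/
noncomputable def P (k j : ℕ) : ℝ := ∏ i ∈ Finset.range j, ((k : ℝ) - i) / k

lemma P_nonneg {k j : ℕ} (h : j ≤ k) : 0 ≤ P k j := by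
  apply Finset.prod_nonneg
  intro i hi
  have hik : (i : ℝ) ≤ k := by
    have : i < j := Finset.mem_range.mp hi
    exact_mod_cast (by omega : i ≤ k)
  have : (0:ℝ) ≤ k := by positivity
  apply div_nonneg <;> linarith

lemma P_le_one {k j : ℕ} (hk : 1 ≤ k) (h : j ≤ k) : P k j ≤ 1 := by
  apply Finset.prod_le_one
  · intro i hi
    have hik : (i : ℝ) ≤ k := by
      have : i < j := Finset.mem_range.mp hi
      exact_mod_cast (by omega : i ≤ k)
    have : (0:ℝ) ≤ k := by positivity
    apply div_nonneg <;> linarith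
  · intro i _
    have hk0 : (0:ℝ) < k := by exact_mod_cast hk
    have hi0 : (0:ℝ) ≤ i := by positivity
    rw [div_le_one hk0]; linarith

lemma term_eq {k : ℕ} (hk : 1 ≤ k) : ∀ j, j ≤ k →
    (Nat.factorial k : ℝ) / ((Nat.factorial (k - j) : ℝ) * (k : ℝ) ^ j) = P k j := by
  intro j
  induction j with
  | zero =>
    have hf : (Nat.factorial k : ℝ) ≠ 0 := by exact_mod_cast (Nat.factorial_pos k).ne'
    simp [P, hf]
  | succ j ih =>
    intro hj
    have hjk : j ≤ k := by omega
    have h1 := ih hjk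
    have hkj : k - j = (k - (j+1)) + 1 := by omega
    have hfac : (Nat.factorial (k - j) : ℝ)
        = (Nat.factorial (k - (j+1)) : ℝ) * ((k : ℝ) - j) := by
      rw [hkj, Nat.factorial_succ]
      push_cast
      have : ((k - (j+1) : ℕ) : ℝ) = (k : ℝ) - (j + 1) := by
        push_cast [Nat.cast_sub hj]; ring
      rw [this]; ring
    have hk0 : (0:ℝ) < k := by exact_mod_cast hk
    have hkj0 : ((k:ℝ) - j) ≠ 0 := by
      have : (j:ℝ) < k := by exact_mod_cast (by omega : j < k)
      linarith
    have hfact0 : (Nat.factorial (k - (j+1)) : ℝ) ≠ 0 := by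
      exact_mod_cast (Nat.factorial_pos _).ne'
    rw [P, Finset.prod_range_succ, ← P, ← h1, hfac]
    field_simp
    ring

lemma cap2_eq {k : ℕ} (hk : 1 ≤ k) : cap 2 k = ∑ j ∈ Finset.range (k+1), P k j := by
  have hk0 : (0:ℝ) < k := by exact_mod_cast hk
  have hrefl := Finset.sum_range_reflect
    (fun l => (k : ℝ) ^ l / (Nat.factorial l : ℝ)) (k+1)
  simp only [Nat.add_sub_cancel] at hrefl
  show ((Nat.factorial k : ℝ) / (k : ℝ) ^ k) *
      ∑ l ∈ Finset.range (k + 1), (k : ℝ) ^ l / (Nat.factorial l : ℝ) = _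
  rw [← hrefl, Finset.mul_sum]
  apply Finset.sum_congr rfl
  intro j hj
  have hjk : j ≤ k := by
    have := Finset.mem_range.mp hj; omega
  rw [← term_eq hk j hjk]
  have hpow : (k : ℝ) ^ k = (k : ℝ) ^ (k - j) * (k : ℝ) ^ j := by
    rw [← pow_add]; congr 1; omega
  rw [hpow]
  have h1 : (k:ℝ) ^ (k-j) ≠ 0 := by positivity
  have h2 : (k:ℝ) ^ j ≠ 0 := by positivity
  have h3 : (Nat.factorial (k - j) : ℝ) ≠ 0 := by
    exact_mod_cast (Nat.factorial_pos _).ne'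
  field_simp

lemma P_ge {k : ℕ} (hk : 1 ≤ k) : ∀ j, j ≤ k →
    1 - (∑ i ∈ Finset.range j, (i:ℝ)) / k ≤ P k j := by
  intro j
  induction j with
  | zero => simp [P]
  | succ j ih =>
    intro hj
    have hjk : j ≤ k := by omega
    have h1 := ih hjk
    have hk0 : (0:ℝ) < k := by exact_mod_cast hk
    have hjR : (j:ℝ) < k := by exact_mod_cast (by omega : j < k)
    have hS : (0:ℝ) ≤ ∑ i ∈ Finset.range j, (i:ℝ) := by positivity
    have hfac0 : (0:ℝ) ≤ ((k:ℝ) - j)/k := by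
      apply div_nonneg <;> linarith
    have hfac1 : ((k:ℝ) - j)/k ≤ 1 := by
      rw [div_le_one hk0]
      have : (0:ℝ) ≤ j := by positivity
      linarith
    have hPj : 0 ≤ P k j := P_nonneg hjk
    rw [P, Finset.prod_range_succ, ← P, Finset.sum_range_succ]
    have key : (1 - (∑ i ∈ Finset.range j, (i:ℝ))/k) * (((k:ℝ) - j)/k)
        ≤ P k j * (((k:ℝ) - j)/k) := by
      apply mul_le_mul_of_nonneg_right h1 hfac0
    refine le_trans ?_ key
    have hexp : ((k:ℝ) - j)/k = 1 - (j:ℝ)/k := by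
      field_simp
    rw [hexp, add_div]
    have hj0 : (0:ℝ) ≤ (j:ℝ)/k := by positivity
    nlinarith [mul_nonneg (div_nonneg hS hk0.le) hj0]

lemma P_le_q {k s : ℕ} (hk : 1 ≤ k) (hs : s ≤ k) : ∀ j, j ≤ k →
    P k j ≤ (1 - (s:ℝ)/k) ^ (j - s) := by
  have hk0 : (0:ℝ) < k := by exact_mod_cast hk
  have hq0 : 0 ≤ 1 - (s:ℝ)/k := by
    have : (s:ℝ)/k ≤ 1 := by
      rw [div_le_one hk0]; exact_mod_cast hs
    linarith
  intro j
  induction j with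
  | zero => simp [P]
  | succ j ih =>
    intro hj
    have hjk : j ≤ k := by omega
    have h1 := ih hjk
    rcases le_or_gt (j+1) s with hcase | hcase
    · have h0 : (j+1) - s = 0 := by omega
      rw [h0, pow_zero]
      exact P_le_one hk hj
    · have hsj : s ≤ j := by omega
      have hstep : (j+1) - s = (j - s) + 1 := by omega
      rw [P, Finset.prod_range_succ, ← P, hstep, pow_succ]
      have hjR : (j:ℝ) < k := by exact_mod_cast (by omega : j < k)
      have hfac0 : (0:ℝ) ≤ ((k:ℝ) - j)/k := by
        apply div_nonneg <;> linarith
      have hfacq : ((k:ℝ) - j)/k ≤ 1 - (s:ℝ)/k := by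
        have hsjR : (s:ℝ) ≤ j := by exact_mod_cast hsj
        rw [sub_div, div_self hk0.ne']
        have : (s:ℝ)/k ≤ (j:ℝ)/k := by gcongr
        linarith
      exact mul_le_mul h1 hfacq hfac0 (pow_nonneg hq0 _)

lemma geom_le {r : ℝ} (h0 : 0 ≤ r) (h1 : r < 1) (n : ℕ) :
    ∑ i ∈ Finset.range n, r ^ i ≤ (1 - r)⁻¹ := by
  calc ∑ i ∈ Finset.range n, r ^ i
      ≤ ∑' i : ℕ, r ^ i := by
        apply Summable.sum_le_tsum _ (fun i _ => pow_nonneg h0 i)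
        exact summable_geometric_of_lt_one h0 h1
    _ = (1 - r)⁻¹ := tsum_geometric_of_lt_one h0 h1

lemma cap2_lower {k : ℕ} (hk : 1 ≤ k) : Real.sqrt k / 2 ≤ cap 2 k := by
  set s := Nat.sqrt k with hs
  have hsk : s ≤ k := Nat.sqrt_le_self k
  have hk0 : (0:ℝ) < k := by exact_mod_cast hk
  -- each of the first s+1 terms is at least 1/2
  have hhalf : ∀ j ∈ Finset.range (s+1), (1:ℝ)/2 ≤ P k j := by
    intro j hj
    have hjs : j ≤ s := by have := Finset.mem_range.mp hj; omega
    have hjk : j ≤ k := le_trans hjs hsk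
    have h1 := P_ge hk j hjk
    -- ∑_{i<j} i * 2 = j*(j-1) ≤ s*s ≤ k
    have hgauss : (∑ i ∈ Finset.range j, i) * 2 = j * (j - 1) :=
      Finset.sum_range_id_mul_two j
    have hnat : (∑ i ∈ Finset.range j, i) * 2 ≤ k := by
      have h2 : j * (j-1) ≤ s * s := Nat.mul_le_mul hjs (by omega)
      have h3 : s * s ≤ k := by
        have := Nat.sqrt_le' k
        simpa [pow_two] using this
      omega
    have hreal : (∑ i ∈ Finset.range j, (i:ℝ)) * 2 ≤ k := by
      have : ((∑ i ∈ Finset.range j, i : ℕ) : ℝ) * 2 ≤ (k:ℝ) := by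
        exact_mod_cast hnat
      simpa [Nat.cast_sum] using this
    have hdiv : (∑ i ∈ Finset.range j, (i:ℝ)) / k ≤ 1/2 := by
      rw [div_le_div_iff₀ hk0 (by norm_num : (0:ℝ) < 2)]
      linarith
    linarith
  have hsum : ((s:ℝ)+1) * (1/2) ≤ ∑ j ∈ Finset.range (s+1), P k j := by
    have := Finset.card_nsmul_le_sum (Finset.range (s+1)) (P k) ((1:ℝ)/2)
      (fun j hj => hhalf j hj)
    simpa [Finset.card_range, nsmul_eq_mul, mul_comm] using this
  have hmono : ∑ j ∈ Finset.range (s+1), P k j ≤ ∑ j ∈ Finset.range (k+1), P k j := by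
    apply Finset.sum_le_sum_of_subset_of_nonneg
    · exact Finset.range_subset_range.mpr (by omega)
    · intro j hj _
      exact P_nonneg (by have := Finset.mem_range.mp hj; omega)
  have hsqrt : Real.sqrt k ≤ (s:ℝ) + 1 := by
    have h1 : (k:ℝ) ≤ ((s:ℝ)+1)^2 := by
      have := Nat.lt_succ_sqrt k
      have : (k:ℝ) < ((s:ℝ)+1) * ((s:ℝ)+1) := by exact_mod_cast this
      nlinarith
    calc Real.sqrt k ≤ Real.sqrt (((s:ℝ)+1)^2) := Real.sqrt_le_sqrt h1
      _ = (s:ℝ)+1 := Real.sqrt_sq (by positivity)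
  rw [cap2_eq hk]
  calc Real.sqrt k / 2 ≤ ((s:ℝ)+1) * (1/2) := by linarith
    _ ≤ ∑ j ∈ Finset.range (s+1), P k j := hsum
    _ ≤ _ := hmono

lemma cap2_upper {k : ℕ} (hk : 1 ≤ k) : cap 2 k ≤ 4 * Real.sqrt k := by
  set s := Nat.sqrt k with hs
  have hs1 : 1 ≤ s := by
    rw [hs]; exact Nat.one_le_iff_ne_zero.mpr (by
      intro h; have := Nat.sqrt_eq_zero.mp h; omega)
  have hsk : s ≤ k := Nat.sqrt_le_self k
  have hk0 : (0:ℝ) < k := by exact_mod_cast hk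
  have hs0 : (0:ℝ) < s := by exact_mod_cast hs1
  set q : ℝ := 1 - (s:ℝ)/k with hq
  have hq0 : 0 ≤ q := by
    have : (s:ℝ)/k ≤ 1 := by
      rw [div_le_one hk0]; exact_mod_cast hsk
    simp [hq]; linarith
  have hq1 : q < 1 := by
    have : 0 < (s:ℝ)/k := by positivity
    simp [hq]; linarith
  rw [cap2_eq hk]
  have hPle : ∀ j ∈ Finset.range (k+1), P k j ≤ q ^ (j - s) := by
    intro j hj
    exact P_le_q hk hsk j (by have := Finset.mem_range.mp hj; omega)
  have hsplit : ∑ j ∈ Finset.range (k+1), P k j ≤ (s:ℝ) + (k:ℝ)/s := by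
    calc ∑ j ∈ Finset.range (k+1), P k j
        ≤ ∑ j ∈ Finset.range (k+1), q ^ (j - s) := Finset.sum_le_sum hPle
      _ = ∑ j ∈ Finset.range s, q ^ (j - s)
            + ∑ j ∈ Finset.Ico s (k+1), q ^ (j - s) := by
          rw [Finset.range_eq_Ico, ← Finset.sum_Ico_consecutive _ (by omega : 0 ≤ s)
            (by omega : s ≤ k+1), ← Finset.range_eq_Ico]
      _ ≤ (s:ℝ) + (k:ℝ)/s := by
          gcongr ?_ + ?_
          · calc ∑ j ∈ Finset.range s, q ^ (j - s)
                ≤ ∑ j ∈ Finset.range s, (1:ℝ) := by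
                  apply Finset.sum_le_sum
                  intro j hj
                  exact pow_le_one₀ hq0 (by linarith)
              _ = (s:ℝ) := by simp
          · rw [Finset.sum_Ico_eq_sum_range]
            have : ∀ t, q ^ ((s + t) - s) = q ^ t := by intro t; congr 1; omega
            calc ∑ t ∈ Finset.range (k+1-s), q ^ ((s+t) - s)
                = ∑ t ∈ Finset.range (k+1-s), q ^ t := by
                  apply Finset.sum_congr rfl; intro t _; rw [this]
              _ ≤ (1 - q)⁻¹ := geom_le hq0 hq1 _
              _ = (k:ℝ)/s := by
                  rw [hq]; field_simp
                  rw [sub_sub_cancel, div_self hs0.ne']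
  have hks : (k:ℝ)/s ≤ (s:ℝ) + 2 := by
    have hnat : k ≤ s*s + 2*s := by
      have := Nat.lt_succ_sqrt k
      have : k < (s+1) * (s+1) := by exact_mod_cast this
      nlinarith
    have hR : (k:ℝ) ≤ (s:ℝ)*(s:ℝ) + 2*(s:ℝ) := by exact_mod_cast hnat
    rw [div_le_iff₀ hs0]
    nlinarith
  have hssqrt : (s:ℝ) ≤ Real.sqrt k := by
    rw [show (s:ℝ) = Real.sqrt ((s:ℝ)^2) from (Real.sqrt_sq (by positivity)).symm]
    apply Real.sqrt_le_sqrt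
    have := Nat.sqrt_le' k
    exact_mod_cast this
  have hsqrt1 : 1 ≤ Real.sqrt k := by
    rw [show (1:ℝ) = Real.sqrt 1 from (Real.sqrt_one).symm]
    apply Real.sqrt_le_sqrt
    exact_mod_cast hk
  calc ∑ j ∈ Finset.range (k+1), P k j ≤ (s:ℝ) + (k:ℝ)/s := hsplit
    _ ≤ 2*(s:ℝ) + 2 := by linarith
    _ ≤ 4 * Real.sqrt k := by linarith

lemma Qall : ∀ d : ℕ, ∃ c C : ℝ, 0 < c ∧ 0 < C ∧ ∃ K : ℕ, 1 ≤ K ∧ ∀ k : ℕ, K ≤ k →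
    c * (k : ℝ) ^ ((d : ℝ) / 2) ≤ cap (d+1) k ∧
    cap (d+1) k ≤ C * (k : ℝ) ^ ((d : ℝ) / 2) := by
  intro d
  induction d using Nat.strong_induction_on with
  | _ d ih =>
    match d, ih with
    | 0, _ =>
      refine ⟨1, 1, one_pos, one_pos, 1, le_refl 1, fun k hk => ?_⟩
      have hk0 : (0:ℝ) < k := by exact_mod_cast hk
      simp only [Nat.cast_zero, zero_div, Real.rpow_zero, mul_one]
      constructor <;> simp [cap]
    | 1, _ =>
      refine ⟨1/2, 4, by norm_num, by norm_num, 1, le_refl 1, fun k hk => ?_⟩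
      have hsq : (k : ℝ) ^ ((1 : ℝ) / 2) = Real.sqrt k := by
        rw [Real.sqrt_eq_rpow]
      rw [Nat.cast_one, hsq]
      constructor
      · have := cap2_lower hk
        linarith
      · exact cap2_upper hk
    | (m+2), ih =>
      obtain ⟨c₁, C₁, hc₁, hC₁, K₁, hK₁, h₁⟩ := ih (m+1) (by omega)
      obtain ⟨c₂, C₂, hc₂, hC₂, K₂, hK₂, h₂⟩ := ih m (by omega)
      refine ⟨c₂ / ((m:ℝ)+1), C₁ + C₂, by positivity, by positivity,
        max K₁ K₂, le_trans hK₁ (le_max_left _ _), fun k hk => ?_⟩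
      have hk1 : 1 ≤ k := le_trans hK₁ (le_trans (le_max_left _ _) hk)
      have hk0 : (0:ℝ) < k := by exact_mod_cast hk1
      have hkR1 : (1:ℝ) ≤ k := by exact_mod_cast hk1
      obtain ⟨hlo₁, hhi₁⟩ := h₁ k (le_trans (le_max_left _ _) hk)
      obtain ⟨hlo₂, hhi₂⟩ := h₂ k (le_trans (le_max_right _ _) hk)
      have hcap : cap (m+3) k = cap (m+2) k + ((k : ℝ) / ((m : ℝ) + 1)) * cap (m+1) k := by
        rfl
      have hm0 : (0:ℝ) < (m:ℝ) + 1 := by positivity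
      have hE : (k : ℝ) ^ (((m:ℕ)+2 : ℝ) / 2) = (k : ℝ) * (k : ℝ) ^ ((m : ℝ) / 2) := by
        have h1 : ((m:ℕ)+2 : ℝ) / 2 = 1 + (m : ℝ) / 2 := by ring
        rw [h1, Real.rpow_add hk0, Real.rpow_one]
      have hle : (k : ℝ) ^ (((m:ℝ)+1) / 2) ≤ (k : ℝ) ^ (((m:ℝ)+2) / 2) := by
        apply Real.rpow_le_rpow_of_exponent_le hkR1
        linarith
      have hpow0 : (0:ℝ) ≤ (k : ℝ) ^ ((m : ℝ) / 2) := by positivity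
      have hcapm2 : 0 ≤ cap (m+2) k := by
        have : (0:ℝ) < c₁ * (k : ℝ) ^ (((m:ℕ)+1 : ℝ) / 2) := by positivity
        push_cast at hlo₁ ⊢
        linarith
      push_cast [hcap] at *
      constructor
      · -- lower bound
        rw [hE]
        have step : ((k:ℝ) / ((m:ℝ)+1)) * (c₂ * (k:ℝ) ^ ((m:ℝ)/2))
            ≤ ((k:ℝ) / ((m:ℝ)+1)) * cap (m+1) k := by
          apply mul_le_mul_of_nonneg_left hlo₂ (by positivity)
        have heq : c₂ / ((m:ℝ)+1) * ((k:ℝ) * (k:ℝ) ^ ((m:ℝ)/2))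
            = ((k:ℝ) / ((m:ℝ)+1)) * (c₂ * (k:ℝ) ^ ((m:ℝ)/2)) := by ring
        rw [heq]
        linarith
      · -- upper bound
        have step1 : cap (m+2) k ≤ C₁ * (k:ℝ) ^ (((m:ℝ)+2)/2) := by
          calc cap (m+2) k ≤ C₁ * (k:ℝ) ^ (((m:ℝ)+1)/2) := hhi₁
            _ ≤ C₁ * (k:ℝ) ^ (((m:ℝ)+2)/2) := by
                apply mul_le_mul_of_nonneg_left hle hC₁.le
        have step2 : ((k:ℝ) / ((m:ℝ)+1)) * cap (m+1) k
            ≤ C₂ * (k:ℝ) ^ (((m:ℝ)+2)/2) := by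
          have h1 : ((k:ℝ) / ((m:ℝ)+1)) * cap (m+1) k
              ≤ ((k:ℝ) / ((m:ℝ)+1)) * (C₂ * (k:ℝ) ^ ((m:ℝ)/2)) := by
            apply mul_le_mul_of_nonneg_left hhi₂ (by positivity)
          have h2 : ((k:ℝ) / ((m:ℝ)+1)) * (C₂ * (k:ℝ) ^ ((m:ℝ)/2))
              ≤ (k:ℝ) * (C₂ * (k:ℝ) ^ ((m:ℝ)/2)) := by
            apply mul_le_mul_of_nonneg_right _ (by positivity)
            rw [div_le_iff₀ hm0]
            nlinarith
          have h3 : (k:ℝ) * (C₂ * (k:ℝ) ^ ((m:ℝ)/2)) = C₂ * ((k:ℝ) ^ (((m:ℝ)+2)/2)) := by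
            have he : ((m:ℝ)+2) / 2 = 1 + (m : ℝ) / 2 := by ring
            rw [he, Real.rpow_add hk0, Real.rpow_one]; ring
          linarith
        linarith

end CapAux

/-- `cap_d(k) = Θ(k^{(d−1)/2})` as `k → ∞`, for every fixed `d ≥ 1`. -/
theorem cap_asymptotics (d : ℕ) (hd : 1 ≤ d) :
    ∃ c C : ℝ, 0 < c ∧ 0 < C ∧ ∃ K : ℕ, ∀ k : ℕ, K ≤ k →
      c * (k : ℝ) ^ (((d : ℝ) - 1) / 2) ≤ cap d k ∧
      cap d k ≤ C * (k : ℝ) ^ (((d : ℝ) - 1) / 2) := by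
  obtain ⟨e, rfl⟩ : ∃ e, d = e + 1 := ⟨d - 1, by omega⟩
  obtain ⟨c, C, hc, hC, K, _, h⟩ := CapAux.Qall e
  refine ⟨c, C, hc, hC, K, fun k hk => ?_⟩
  have hcast : (((e:ℕ)+1 : ℝ) - 1) / 2 = (e : ℝ) / 2 := by push_cast; ring
  have := h k hk
  push_cast [hcast] at this ⊢
  convert this using 3 <;> push_cast <;> ring
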